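/- If n and k are both even and k divides n, then the cycle of length 2k divides Q_n. -/

import Mathlib

open SimpleGraph

/-- `H` divides `G`: the edge set of `G` can be partitioned into edge sets of
subgraphs of `G`, each isomorphic to `H`. -/
def GraphDivides {α β : Type} (H : SimpleGraph α) (G : SimpleGraph β) : Prop :=
  ∃ (ι : Type) (f : ι → G.Subgraph),
    (∀ i, Nonempty (H ≃g (f i).coe)) ∧
    ∀ e ∈ G.edgeSet, ∃! i, e ∈ (f i).edgeSet

/-- The `n`-dimensional hypercube graph. -/
def cube (n : ℕ) : SimpleGraph (Fin n → ZMod 2) where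
  Adj x y := hammingDist x y = 1
  symm := ⟨fun (x y : Fin n → ZMod 2) h => by
    have h' : hammingDist x y = 1 := h
    show hammingDist y x = 1
    rwa [hammingDist_comm]⟩
  loopless := ⟨fun (x : Fin n → ZMod 2) h => by
    have h' : hammingDist x x = 1 := h
    simp [hammingDist_self] at h'⟩

/-!
Group the `n` coordinates into `n / k` blocks of `k`: the edges of `Q_n` in the directions of one
block form vertex-disjoint copies of `Q_k`, so it suffices to decompose `Q_k`. There, flipping the
coordinates `0, 1, …, k - 1` in turn, twice over, traces a `2k`-cycle from any start `x`, and the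
cycles from `x` and `x + 1` coincide. After `t` steps the coordinate sum has changed by
`t (mod 2)`, and for `k` even `t ≡ t % k (mod 2)`: the cycles starting at vectors of even weight
traverse each edge in direction `j` from its endpoint of coordinate sum `j (mod 2)`. Up to
`x ↦ x + 1` this pins the start down, so these cycles partition the edges of `Q_k`.
-/

open Function

lemma ZMod.eq_add_one_of_ne {a b : ZMod 2} (h : a ≠ b) : b = a + 1 := by revert a b; decide

lemma Even.natCast_mod_zmod_two {k : ℕ} (hk : Even k) (t : ℕ) : ((t % k : ℕ) : ZMod 2) = t := by
  conv_rhs => rw [← Nat.mod_add_div t k]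
  push_cast
  rw [hk.natCast_zmod_two, zero_mul, add_zero]

lemma Function.Injective.extend_single_zero {ι κ M : Type*} [DecidableEq ι] [DecidableEq κ]
    [Zero M] {f : ι → κ} (hf : Injective f) (i : ι) (a : M) :
    extend f (Pi.single i a) 0 = Pi.single (f i) a := by
  funext j
  by_cases hj : ∃ i', f i' = j
  · obtain ⟨i', rfl⟩ := hj
    simp [hf.extend_apply, Pi.single_apply, hf.eq_iff]
  · rw [extend_apply' _ _ _ hj, Pi.single_eq_of_ne (fun h => hj ⟨i, h.symm⟩), Pi.zero_apply]

lemma Function.Injective.eq_extend_iff {α β γ : Type*} {f : α → β} (hf : Injective f)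
    {g : β → γ} {y : α → γ} {z : β → γ} :
    g = extend f y z ↔ (∀ a, g (f a) = y a) ∧ ∀ b, (¬∃ a, f a = b) → g b = z b := by
  constructor
  · rintro rfl
    exact ⟨hf.extend_apply y z, fun b hb => extend_apply' y z b hb⟩
  · rintro ⟨hy, hz⟩
    funext b
    by_cases hb : ∃ a, f a = b
    · obtain ⟨a, rfl⟩ := hb
      rw [hy, hf.extend_apply]
    · rw [hz b hb, extend_apply' y z b hb]

lemma SimpleGraph.cycleGraph_adj_iff_eq_add_one {n : ℕ} [NeZero n] (hn : 2 ≤ n) {u v : Fin n} :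
    (cycleGraph n).Adj u v ↔ v = u + 1 ∨ u = v + 1 := by
  have h1 : (1 : Fin n).val = 1 := by rw [Fin.val_one', Nat.mod_eq_of_lt hn]
  rw [cycleGraph_adj', ← h1, ← Fin.ext_iff, ← Fin.ext_iff, sub_eq_iff_eq_add, sub_eq_iff_eq_add,
    add_comm 1, add_comm 1, or_comm]

section Copies

variable {α β γ : Type} {H : SimpleGraph α} {K : SimpleGraph β} {G : SimpleGraph γ}

lemma SimpleGraph.Copy.mem_toSubgraph_edgeSet {f : Copy H G} {e : Sym2 γ} :
    e ∈ f.toSubgraph.edgeSet ↔ ∃ e' ∈ H.edgeSet, Sym2.map f e' = e := by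
  simp [Copy.toSubgraph]

lemma graphDivides_iff_exists_copies : GraphDivides H G ↔
    ∃ (ι : Type) (f : ι → Copy H G), ∀ e ∈ G.edgeSet, ∃! i, e ∈ (f i).toSubgraph.edgeSet := by
  constructor
  · rintro ⟨ι, S, hS, hSe⟩
    choose f _ hf using fun i => Copy.toSubgraph_surjOn (hS i)
    exact ⟨ι, f, by simpa only [hf] using hSe⟩
  · rintro ⟨ι, f, hf⟩
    exact ⟨ι, fun i => (f i).toSubgraph, fun i => ⟨(f i).isoToSubgraph⟩, hf⟩

theorem GraphDivides.trans (hHK : GraphDivides H K) (hKG : GraphDivides K G) :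
    GraphDivides H G := by
  obtain ⟨ι, f, hf⟩ := graphDivides_iff_exists_copies.mp hHK
  obtain ⟨κ, g, hg⟩ := graphDivides_iff_exists_copies.mp hKG
  refine graphDivides_iff_exists_copies.mpr ⟨ι × κ, fun p => (g p.2).comp (f p.1), ?_⟩
  intro e he
  obtain ⟨j, hj, hj_unique⟩ := hg e he
  obtain ⟨e', he', rfl⟩ := Copy.mem_toSubgraph_edgeSet.mp hj
  obtain ⟨i, hi, hi_unique⟩ := hf e' he'
  obtain ⟨e₀, he₀, rfl⟩ := Copy.mem_toSubgraph_edgeSet.mp hi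
  refine ⟨(i, j), Copy.mem_toSubgraph_edgeSet.mpr ⟨e₀, he₀, by simp [Sym2.map_map]⟩, ?_⟩
  rintro ⟨i', j'⟩ hmem
  obtain ⟨e₁, he₁, heq⟩ := Copy.mem_toSubgraph_edgeSet.mp hmem
  rw [Copy.coe_comp, ← Sym2.map_map] at heq
  obtain rfl : j' = j :=
    hj_unique j' (Copy.mem_toSubgraph_edgeSet.mpr ⟨_, (f i').toHom.map_mem_edgeSet he₁, heq⟩)
  have heq' := Sym2.map.injective (g j').injective heq
  exact congrArg (·, j') (hi_unique i' (Copy.mem_toSubgraph_edgeSet.mpr ⟨e₁, he₁, heq'⟩))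

end Copies

namespace Cube

section Edges

variable {n : ℕ}

def edge (u : Fin n → ZMod 2) (j : Fin n) : Sym2 (Fin n → ZMod 2) := s(u, u + Pi.single j 1)

lemma adj_iff {u w : Fin n → ZMod 2} : (cube n).Adj u w ↔ ∃ j, w = u + Pi.single j 1 := by
  change hammingDist u w = 1 ↔ _
  constructor
  · intro h
    obtain ⟨j, hj⟩ := Finset.card_eq_one.mp h
    have hmem (i : Fin n) : u i ≠ w i ↔ i = j := by
      simpa using Finset.ext_iff.mp hj i
    refine ⟨j, funext fun i => ?_⟩
    by_cases hij : i = j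
    · subst hij
      simpa using ZMod.eq_add_one_of_ne ((hmem i).mpr rfl)
    · simpa [hij] using (not_not.mp (mt (hmem i).mp hij)).symm
  · rintro ⟨j, rfl⟩
    refine Finset.card_eq_one.mpr ⟨j, Finset.ext fun i => ?_⟩
    by_cases hij : i = j <;> simp [hij]

lemma edge_mem_edgeSet (u : Fin n → ZMod 2) (j : Fin n) : edge u j ∈ (cube n).edgeSet :=
  adj_iff.mpr ⟨j, rfl⟩

lemma exists_eq_edge : ∀ e ∈ (cube n).edgeSet, ∃ u j, e = edge u j := by
  refine Sym2.ind fun u w he => ?_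
  rw [mem_edgeSet, adj_iff] at he
  obtain ⟨j, rfl⟩ := he
  exact ⟨u, j, rfl⟩

lemma edge_add_single (u : Fin n → ZMod 2) (j : Fin n) : edge (u + Pi.single j 1) j = edge u j := by
  rw [edge, edge, add_assoc, ← Pi.single_add, CharTwo.add_self_eq_zero, Pi.single_zero, add_zero,
    Sym2.eq_swap]

lemma single_one_injective : Injective (fun j : Fin n => (Pi.single j 1 : Fin n → ZMod 2)) := by
  intro i j h
  by_contra hij
  simpa [hij] using congrFun h i

lemma edge_eq_edge_iff {u v : Fin n → ZMod 2} {i j : Fin n} :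
    edge u i = edge v j ↔ i = j ∧ (v = u ∨ v = u + Pi.single i 1) := by
  constructor
  · intro h
    rcases Sym2.eq_iff.mp h with ⟨rfl, h⟩ | ⟨rfl, h⟩
    · exact ⟨single_one_injective (add_left_cancel h), Or.inl rfl⟩
    · refine ⟨single_one_injective ?_, Or.inr h.symm⟩
      have hsum : Pi.single j 1 + Pi.single i 1 = (0 : Fin n → ZMod 2) :=
        add_left_cancel (a := v) (by rw [← add_assoc, h, add_zero])
      change Pi.single i 1 = Pi.single j 1
      rw [eq_neg_of_add_eq_zero_left hsum]
      exact (funext fun _ => ZMod.neg_eq_self_mod_two _).symm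
  · rintro ⟨rfl, rfl | rfl⟩
    · rfl
    · exact (edge_add_single u i).symm

lemma sum_add_single (v : Fin n → ZMod 2) (j : Fin n) :
    ∑ i, (v + Pi.single j 1 : Fin n → ZMod 2) i = ∑ i, v i + 1 := by
  simp [Finset.sum_add_distrib]

lemma exists_eq_edge_and_sum_eq : ∀ e ∈ (cube n).edgeSet,
    ∃ v j, e = edge v j ∧ ∑ i, v i = (j : ℕ) := by
  intro e he
  obtain ⟨u, j, rfl⟩ := exists_eq_edge e he
  by_cases hu : ∑ i, u i = (j : ℕ)
  · exact ⟨u, j, rfl, hu⟩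
  · refine ⟨u + Pi.single j 1, j, (edge_add_single u j).symm, ?_⟩
    rw [sum_add_single, ← ZMod.eq_add_one_of_ne hu]

end Edges

section Subcubes

variable {k n : ℕ} {β : Type} (σ : Fin k × β ≃ Fin n)

lemma block_injective (b : β) : Injective fun i => σ (i, b) :=
  fun _ _ h => congrArg Prod.fst (σ.injective h)

lemma extend_block_add_single (b : β) (y : Fin k → ZMod 2) (z : Fin n → ZMod 2) (i : Fin k) :
    extend (fun i => σ (i, b)) (y + Pi.single i 1) z =
      extend (fun i => σ (i, b)) y z + Pi.single (σ (i, b)) 1 := by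
  conv_lhs => rw [← add_zero z, extend_add, (block_injective σ b).extend_single_zero]

noncomputable def subcube (b : β) (z : Fin n → ZMod 2) : Copy (cube k) (cube n) where
  toHom.toFun y := extend (fun i => σ (i, b)) y z
  toHom.map_rel' {y y'} h := by
    obtain ⟨i, rfl⟩ := adj_iff.mp h
    exact adj_iff.mpr ⟨σ (i, b), extend_block_add_single σ b y z i⟩
  injective' y y' h := funext fun i => by
    simpa [(block_injective σ b).extend_apply] using congrFun h (σ (i, b))

lemma mem_subcube_edgeSet {b : β} {z : Fin n → ZMod 2} {e : Sym2 (Fin n → ZMod 2)} :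
    e ∈ (subcube σ b z).toSubgraph.edgeSet ↔
      ∃ y i, e = edge (extend (fun i => σ (i, b)) y z) (σ (i, b)) := by
  rw [Copy.mem_toSubgraph_edgeSet]
  constructor
  · rintro ⟨e', he', rfl⟩
    obtain ⟨y, i, rfl⟩ := exists_eq_edge e' he'
    exact ⟨y, i, congrArg (s(_, ·)) (extend_block_add_single σ b y z i)⟩
  · rintro ⟨y, i, rfl⟩
    exact ⟨edge y i, edge_mem_edgeSet y i, congrArg (s(_, ·)) (extend_block_add_single σ b y z i)⟩

end Subcubes

theorem graphDivides_of_equiv {k n : ℕ} {β : Type} (σ : Fin k × β ≃ Fin n) :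
    GraphDivides (cube k) (cube n) := by
  refine graphDivides_iff_exists_copies.mpr
    ⟨{p : β × (Fin n → ZMod 2) // ∀ i, p.2 (σ (i, p.1)) = 0}, fun p => subcube σ p.1.1 p.1.2, ?_⟩
  intro e he
  obtain ⟨u, j, rfl⟩ := exists_eq_edge e he
  obtain ⟨⟨i, b⟩, rfl⟩ := σ.surjective j
  have hf := block_injective σ b
  refine ⟨⟨(b, extend (fun i => σ (i, b)) 0 u), hf.extend_apply 0 u⟩, ?_, ?_⟩
  · refine (mem_subcube_edgeSet σ).mpr ⟨fun i => u (σ (i, b)), i, ?_⟩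
    rw [← hf.eq_extend_iff.mpr ⟨fun _ => rfl, fun l hl => (extend_apply' _ _ l hl).symm⟩]
  · rintro ⟨⟨b', z'⟩, hz'⟩ hmem
    obtain ⟨y', i', heq⟩ := (mem_subcube_edgeSet σ).mp hmem
    obtain ⟨hσ, hv⟩ := edge_eq_edge_iff.mp heq
    obtain ⟨rfl, rfl⟩ := Prod.ext_iff.mp (σ.injective hσ)
    refine Subtype.ext (Prod.ext rfl (hf.eq_extend_iff.mpr ⟨hz', fun l hl => ?_⟩))
    have hoff : extend (fun i => σ (i, b)) y' z' l = z' l := extend_apply' y' z' l hl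
    have hl' : l ≠ σ (i, b) := fun h => hl ⟨i, h.symm⟩
    dsimp only at hv
    rcases hv with hv | hv
    · exact hoff.symm.trans (congrFun hv l)
    · exact hoff.symm.trans (by rw [hv, Pi.add_apply, Pi.single_eq_of_ne hl', add_zero])

theorem graphDivides_of_dvd {k n : ℕ} (h : k ∣ n) : GraphDivides (cube k) (cube n) := by
  obtain ⟨m, rfl⟩ := h
  exact graphDivides_of_equiv finProdFinEquiv

section Cycles

variable {k : ℕ}

/-- Walking around the cycle flips the coordinates `0, 1, …, k - 1, 0, 1, …, k - 1` in turn;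
`flips k t` records which coordinates have been flipped an odd number of times after `t ≤ 2k`
steps. -/
def flips (k t : ℕ) : Fin k → ZMod 2 := fun i => if i.val < t ∧ t ≤ i.val + k then 1 else 0

lemma flips_zero : flips k 0 = 0 := by
  funext i
  simp [flips]

lemma flips_two_mul : flips k (2 * k) = 0 := by
  funext i
  simp only [flips, Pi.zero_apply, ite_eq_right_iff]
  omega

lemma flips_add_self {t : ℕ} (ht : t < k) : flips k (t + k) = flips k t + fun _ => 1 := by
  funext i
  simp only [flips, Pi.add_apply]
  split_ifs <;> first | decide | omega

lemma eq_of_flips_eq {t s : ℕ} (ht : t < 2 * k) (hs : s < 2 * k) (h : flips k t = flips k s) :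
    t = s := by
  have key (i : ℕ) (hi : i < k) : (i < t ∧ t ≤ i + k) ↔ (i < s ∧ s ≤ i + k) := by
    have := congrFun h ⟨i, hi⟩
    simp only [flips] at this
    split_ifs at this <;> tauto
  rcases Nat.lt_or_ge t k with h1 | h1 <;> rcases Nat.lt_or_ge s k with h2 | h2
  · have k1 := key t h1; have k2 := key s h2; omega
  · have k1 := key t h1; have k2 := key (s - k) (by omega); omega
  · have k1 := key (t - k) (by omega); have k2 := key s h2; omega
  · have k1 := key (t - k) (by omega); have k2 := key (s - k) (by omega); omega

variable [NeZero k]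

lemma flips_succ {t : ℕ} (ht : t < 2 * k) :
    flips k (t + 1) = flips k t + Pi.single (Fin.ofNat k t) 1 := by
  funext i
  have hmod : t % k = t ∨ t % k + k = t := by
    rcases Nat.lt_or_ge t k with h | h
    · exact Or.inl (Nat.mod_eq_of_lt h)
    · right; rw [Nat.mod_eq_sub_mod h, Nat.mod_eq_of_lt (by omega)]; omega
  have hr := Nat.mod_lt t (NeZero.pos k)
  have hi := i.isLt
  simp only [flips, Pi.add_apply, Pi.single_apply, Fin.ext_iff, Fin.val_ofNat]
  generalize t % k = r at *
  split_ifs <;> first | decide | omega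

lemma sum_flips {t : ℕ} (ht : t ≤ 2 * k) : ∑ i, flips k t i = t := by
  induction t with
  | zero => simp [flips_zero]
  | succ t ih =>
    simp only [flips_succ (show t < 2 * k by omega), Pi.add_apply]
    rw [Finset.sum_add_distrib, ih (by omega), Finset.sum_pi_single']
    simp

lemma flips_val_add_one (t : Fin (2 * k)) :
    flips k (t + 1 : Fin (2 * k)) = flips k t + Pi.single (Fin.ofNat k t) 1 := by
  rw [← flips_succ t.isLt, Fin.val_add, Fin.val_one', Nat.add_mod_mod]
  rcases Nat.lt_or_ge (t.val + 1) (2 * k) with h | h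
  · rw [Nat.mod_eq_of_lt h]
  · rw [show t.val + 1 = 2 * k by omega, Nat.mod_self, flips_zero, flips_two_mul]

lemma flips_eq_of_ofNat_eq {t : Fin (2 * k)} {j : Fin k} (h : Fin.ofNat k t = j) :
    ∃ c : ZMod 2, flips k t = flips k j + fun _ => c := by
  rw [Fin.ext_iff, Fin.val_ofNat] at h
  rcases Nat.lt_or_ge t k with ht | ht
  · refine ⟨0, ?_⟩
    rw [← h, Nat.mod_eq_of_lt ht]
    exact (add_zero _).symm
  · refine ⟨1, ?_⟩
    rw [← h, Nat.mod_eq_sub_mod ht, Nat.mod_eq_of_lt (by omega), ← flips_add_self (by omega),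
      Nat.sub_add_cancel ht]

lemma exists_flips_eq (j : Fin k) (c : ZMod 2) :
    ∃ t : Fin (2 * k), Fin.ofNat k t = j ∧ flips k t = flips k j + fun _ => c := by
  obtain rfl | rfl : c = 0 ∨ c = 1 := by revert c; decide
  · exact ⟨⟨j, by omega⟩, by ext; simp, (add_zero _).symm⟩
  · exact ⟨⟨j + k, by omega⟩, by ext; simp [Nat.mod_eq_of_lt j.isLt], flips_add_self j.isLt⟩

def cycle (x : Fin k → ZMod 2) : Copy (cycleGraph (2 * k)) (cube k) where
  toHom.toFun t := x + flips k t
  toHom.map_rel' {t s} h := by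
    rcases (cycleGraph_adj_iff_eq_add_one (Nat.le_mul_of_pos_right 2 (NeZero.pos k))).mp h
      with rfl | rfl
    · exact adj_iff.mpr ⟨_, by rw [flips_val_add_one, add_assoc]⟩
    · exact (adj_iff.mpr ⟨_, by rw [flips_val_add_one, add_assoc]⟩).symm
  injective' t s h := Fin.ext (eq_of_flips_eq t.isLt s.isLt (add_left_cancel h))

lemma cycle_apply (x : Fin k → ZMod 2) (t : Fin (2 * k)) : cycle x t = x + flips k t := rfl

lemma map_cycle_edge (x : Fin k → ZMod 2) (t : Fin (2 * k)) :
    Sym2.map (cycle x) s(t, t + 1) = edge (x + flips k t) (Fin.ofNat k t) := by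
  rw [Sym2.map_mk, cycle_apply, cycle_apply, flips_val_add_one, ← add_assoc, edge]

lemma mem_cycle_edgeSet {x : Fin k → ZMod 2} {e : Sym2 (Fin k → ZMod 2)} :
    e ∈ (cycle x).toSubgraph.edgeSet ↔
      ∃ t : Fin (2 * k), e = edge (x + flips k t) (Fin.ofNat k t) := by
  have hadj (t s : Fin (2 * k)) :=
    cycleGraph_adj_iff_eq_add_one (u := t) (v := s) (Nat.le_mul_of_pos_right 2 (NeZero.pos k))
  rw [Copy.mem_toSubgraph_edgeSet]
  constructor
  · rintro ⟨e', he', rfl⟩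
    induction e' using Sym2.ind with
    | h t s =>
    rw [mem_edgeSet, hadj] at he'
    rcases he' with rfl | rfl
    · exact ⟨t, map_cycle_edge x t⟩
    · exact ⟨s, by rw [Sym2.eq_swap, map_cycle_edge]⟩
  · rintro ⟨t, rfl⟩
    exact ⟨s(t, t + 1), (hadj _ _).mpr (Or.inl rfl), map_cycle_edge x t⟩

lemma edge_mem_cycle_iff (hk : Even k) {x v : Fin k → ZMod 2} {j : Fin k} (hx : ∑ i, x i = 0)
    (hv : ∑ i, v i = (j : ℕ)) :
    edge v j ∈ (cycle x).toSubgraph.edgeSet ↔ ∃ c : ZMod 2, x = v + flips k j + fun _ => c := by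
  rw [mem_cycle_edgeSet]
  constructor
  · rintro ⟨t, ht⟩
    obtain ⟨hj, hxv | hxv⟩ := edge_eq_edge_iff.mp ht
    · obtain ⟨c, hc⟩ := flips_eq_of_ofNat_eq hj.symm
      refine ⟨c, ?_⟩
      rw [← hxv, hc, add_assoc, add_assoc, CharTwo.add_self_eq_zero, add_zero]
    · have hparity : ∑ i, (x + flips k t : Fin k → ZMod 2) i = (j : ℕ) := by
        simp only [Pi.add_apply, Finset.sum_add_distrib, hx, zero_add, sum_flips t.isLt.le]
        rw [← hk.natCast_mod_zmod_two, hj, Fin.val_ofNat]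
      rw [hxv, sum_add_single, hv] at hparity
      simp at hparity
  · rintro ⟨c, rfl⟩
    obtain ⟨t, hj, hc⟩ := exists_flips_eq j c
    refine ⟨t, ?_⟩
    rw [hj, hc, add_assoc v, add_assoc, CharTwo.add_self_eq_zero, add_zero]

end Cycles

theorem cycleGraph_two_mul_graphDivides {k : ℕ} (hk : Even k) :
    GraphDivides (cycleGraph (2 * k)) (cube k) := by
  rcases eq_zero_or_neZero k with rfl | _
  · refine graphDivides_iff_exists_copies.mpr ⟨Empty, Empty.elim, fun e he => ?_⟩
    obtain ⟨-, j, -⟩ := exists_eq_edge e he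
    exact j.elim0
  refine graphDivides_iff_exists_copies.mpr
    ⟨{x : Fin k → ZMod 2 // ∑ i, x i = 0 ∧ x 0 = 0}, fun x => cycle x.1, fun e he => ?_⟩
  obtain ⟨v, j, rfl, hv⟩ := exists_eq_edge_and_sum_eq e he
  set w := v + flips k j
  have hsum (c : ZMod 2) : ∑ i, (w + fun _ => c : Fin k → ZMod 2) i = 0 := by
    simp only [w, Pi.add_apply, Finset.sum_add_distrib, hv, sum_flips (by omega : j.val ≤ 2 * k),
      CharTwo.add_self_eq_zero, Finset.sum_const, Finset.card_univ, Fintype.card_fin,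
      nsmul_eq_mul, hk.natCast_zmod_two, zero_mul]
  have hnorm (c : ZMod 2) : (w + fun _ => c : Fin k → ZMod 2) 0 = 0 ↔ c = w 0 :=
    (CharTwo.add_eq_zero (a := w 0)).trans eq_comm
  refine ⟨⟨w + fun _ => w 0, hsum _, (hnorm _).mpr rfl⟩,
    (edge_mem_cycle_iff hk (hsum _) hv).mpr ⟨_, rfl⟩, ?_⟩
  rintro ⟨x, hx, hx0⟩ hmem
  obtain ⟨c, rfl⟩ := (edge_mem_cycle_iff hk hx hv).mp hmem
  obtain rfl := (hnorm c).mp hx0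
  rfl

end Cube

theorem cycle_two_k_divides_cube_general (n k : ℕ) (hk : Even k) (hdvd : k ∣ n) :
    GraphDivides (cycleGraph (2 * k)) (cube n) :=
  (Cube.cycleGraph_two_mul_graphDivides hk).trans (Cube.graphDivides_of_dvd hdvd)

theorem cycle_two_k_divides_cube (n k : ℕ) (hn : Even n) (hk : Even k) (hdvd : k ∣ n) :
    GraphDivides (cycleGraph (2 * k)) (cube n) :=
  cycle_two_k_divides_cube_general n k hk hdvd
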